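/- For a partition $\mu$ of length $n$ (i.e. $\mu_1 \ge \cdots \ge \mu_n \ge 0$), define the Schur polynomial $S_\mu(X_1,\dots,X_n) = \det(X_j^{\mu_i + n - i})_{i,j} / \prod_{i<j}(X_i - X_j)$. Then for every dominant $\mu$ and every $1 \le j \le n$, $e_j(X_1,\dots,X_n) \cdot S_\mu = \sum_{\epsilon \in I(j)} S_{\mu+\epsilon}$, where $e_j$ is the $j$-th elementary symmetric polynomial, the sum runs over $\{0,1\}$-vectors $\epsilon$ with exactly $j$ ones such that $\mu + \epsilon$ is dominant, and terms with $\mu+\epsilon$ non-dominant contribute zero. -/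

import Mathlib

open Finset MvPolynomial

private lemma pieri_det {R : Type*} [CommRing R] {n : ℕ} (lam : Fin n → ℕ) (j : ℕ) :
    MvPolynomial.esymm (Fin n) R j
        * Matrix.det (Matrix.of fun i k : Fin n => (X k : MvPolynomial (Fin n) R) ^ lam i)
      = ∑ ε ∈ Finset.univ.filter
          (fun ε : Fin n → Bool => (Finset.univ.filter (fun i => ε i = true)).card = j),
        Matrix.det (Matrix.of fun i k : Fin n =>
          (X k : MvPolynomial (Fin n) R) ^ (lam i + if ε i then 1 else 0)) := by
  rw [esymm, Finset.sum_mul]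
  simp only [Matrix.det_apply, Matrix.of_apply, Finset.mul_sum]
  rw [← Finset.sum_product', ← Finset.sum_product']
  refine Finset.sum_nbij' (fun p => ((fun i => decide ((p.2)⁻¹ i ∈ p.1)), p.2))
    (fun q => (Finset.univ.filter fun k => q.1 (q.2 k) = true, q.2)) ?_ ?_ ?_ ?_ ?_
  · rintro ⟨T, σ⟩ hp
    simp only [Finset.mem_product, Finset.mem_powersetCard, Finset.mem_filter,
      Finset.mem_univ, true_and] at hp ⊢
    rw [show Finset.univ.filter (fun i => decide (σ⁻¹ i ∈ T) = true)
        = T.map σ.toEmbedding by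
      ext i
      simp [Equiv.Perm.inv_def, Equiv.symm_apply_eq, eq_comm]]
    · rw [Finset.card_map]; exact ⟨hp.1.2, trivial⟩
  · rintro ⟨ε, σ⟩ hq
    simp only [Finset.mem_product, Finset.mem_filter, Finset.mem_univ, true_and,
      Finset.mem_powersetCard] at hq ⊢
    refine ⟨⟨Finset.filter_subset _ _, ?_⟩, trivial⟩
    rw [show Finset.univ.filter (fun k => ε (σ k) = true)
        = (Finset.univ.filter fun i => ε i = true).map σ⁻¹.toEmbedding by
      ext i
      simp only [Finset.mem_filter, Finset.mem_map, Finset.mem_univ, true_and,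
        Equiv.coe_toEmbedding, Equiv.Perm.inv_def]
      constructor
      · intro h; exact ⟨σ i, h, σ.symm_apply_apply i⟩
      · rintro ⟨a, ha, rfl⟩; rwa [Equiv.apply_symm_apply]]
    rw [Finset.card_map]; exact hq.1
  · rintro ⟨T, σ⟩ hp
    simp only [Finset.mem_product, Finset.mem_powersetCard] at hp
    refine Prod.ext ?_ rfl
    simp only
    ext i
    simp only [Finset.mem_filter, Finset.mem_univ, true_and, Equiv.Perm.inv_def, Equiv.symm_apply_apply,
      decide_eq_true_eq]
  · rintro ⟨ε, σ⟩ hq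
    refine Prod.ext ?_ rfl
    funext i
    simp [Finset.mem_filter]
  · rintro ⟨T, σ⟩ hp
    simp only [Equiv.Perm.inv_def, Equiv.symm_apply_apply, decide_eq_true_eq]
    rw [mul_smul_comm]
    congr 1
    have h1 : ∏ k ∈ T, (X k : MvPolynomial (Fin n) R)
        = ∏ i : Fin n, (X i : MvPolynomial (Fin n) R) ^ (if i ∈ T then 1 else 0) := by
      simp only [pow_ite, pow_one, pow_zero, Finset.prod_ite_mem, Finset.univ_inter]
    rw [h1, ← Finset.prod_mul_distrib]
    exact Finset.prod_congr rfl fun i _ => by rw [← pow_add, add_comm]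

/-- **Pieri rule.** If `S ν` denotes the Schur polynomial attached to `ν` (characterized by
`S ν * ∏_{i<j} (X i - X j) = det (X j ^ (ν i + n - 1 - i))`, which extends by zero to
non-dominant `ν`), then for dominant `μ` and `1 ≤ j ≤ n`,
`e_j * S μ = ∑_{ε ∈ I(j)} S (μ + ε)` (terms with `μ + ε` non-dominant contributing zero). -/
theorem stmt_1 {R : Type*} [CommRing R] [IsDomain R] {n : ℕ}
    (S : (Fin n → ℕ) → MvPolynomial (Fin n) R)
    (hS : ∀ ν : Fin n → ℕ,
      S ν * ∏ p ∈ Finset.univ.filter (fun p : Fin n × Fin n => p.1 < p.2), (X p.1 - X p.2)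
        = Matrix.det (Matrix.of fun i j : Fin n =>
            (X j : MvPolynomial (Fin n) R) ^ (ν i + (n - 1 - (i : ℕ)))))
    (μ : Fin n → ℕ) (hμ : ∀ i j : Fin n, i ≤ j → μ j ≤ μ i)
    (j : ℕ) (hj1 : 1 ≤ j) (hjn : j ≤ n) :
    MvPolynomial.esymm (Fin n) R j * S μ
      = ∑ ε ∈ Finset.univ.filter
          (fun ε : Fin n → Bool => (Finset.univ.filter (fun i => ε i = true)).card = j),
        S (fun i => μ i + if ε i then 1 else 0) := by
  have hne : (∏ p ∈ Finset.univ.filter (fun p : Fin n × Fin n => p.1 < p.2),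
      ((X p.1 - X p.2) : MvPolynomial (Fin n) R)) ≠ 0 := by
    rw [Finset.prod_ne_zero_iff]
    intro p hp
    rw [sub_ne_zero]
    intro h
    exact absurd (MvPolynomial.X_injective h) (ne_of_lt (Finset.mem_filter.mp hp).2)
  apply mul_right_cancel₀ hne
  rw [mul_assoc, hS μ, Finset.sum_mul,
    Finset.sum_congr rfl (fun ε _ => hS (fun i => μ i + if ε i then 1 else 0)),
    pieri_det (fun i : Fin n => μ i + (n - 1 - (i : ℕ))) j]
  refine Finset.sum_congr rfl fun ε _ => ?_
  congr 1
  funext i k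
  rw [Matrix.of_apply, Matrix.of_apply]
  congr 1
  omega
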